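/- Let T_X be the finite set of all rooted binary tree topologies on X, let q : T_X → ℝ≥0, let X̄ ⊆ X with |X̄| ≥ 2, and define q|X̄(τ̄) = Σ_{τ ∈ T_X : τ|X̄ = τ̄} q(τ) and, for subsplits a, d on X, q(a →* d) = Σ_{τ ∈ T_X : a, d ∈ τ and d is a descendant of a in τ} q(τ). Then for every pair of nontrivial subsplits t̄, s̄ on X̄ with U(s̄) a child clade of t̄: Σ_{τ̄ : (t̄ → s̄) is a PCSP of τ̄} q|X̄(τ̄) = Σ_{a : a|X̄ = t̄} Σ_{d : d|X̄ = s̄} q(a →* d). -/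

import Mathlib

open Finset

attribute [local instance] Classical.propDecidable

/-- A subsplit on taxa of type `α`: an unordered pair of finite subsets of taxa. -/
abbrev Subsplit (α : Type*) := Sym2 (Finset α)

/-- A parent-child subsplit pair (PCSP): a pair `(t, s)` of subsplits. -/
abbrev PCSPair (α : Type*) := Subsplit α × Subsplit α

namespace Subsplit

variable {α : Type*} [DecidableEq α]

/-- The parent clade `U(s)` of a subsplit: the union of its two child clades. -/
def clade (s : Subsplit α) : Finset α :=
  Sym2.lift ⟨fun Y Z => Y ∪ Z, fun _ _ => Finset.union_comm _ _⟩ s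

/-- A subsplit is valid when its two child clades are disjoint. -/
def Valid (s : Subsplit α) : Prop :=
  Sym2.lift ⟨fun Y Z => Disjoint Y Z, fun _ _ => propext disjoint_comm⟩ s

/-- A subsplit is nontrivial when both child clades are nonempty. -/
def Nontriv (s : Subsplit α) : Prop :=
  Sym2.lift ⟨fun Y Z => Y.Nonempty ∧ Z.Nonempty, fun _ _ => propext and_comm⟩ s

/-- Restriction of a subsplit to a taxon subset `B`. -/
def restrict (s : Subsplit α) (B : Finset α) : Subsplit α := Sym2.map (fun Y => Y ∩ B) s

end Subsplit

section Defs

variable {α : Type*} [DecidableEq α]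

/-- `τ` is a rooted binary tree topology on the clade `W`. -/
structure IsTopology (W : Finset α) (τ : Finset (Subsplit α)) : Prop where
  two_le : 2 ≤ W.card
  valid : ∀ s ∈ τ, Subsplit.Valid s
  nontriv : ∀ s ∈ τ, Subsplit.Nontriv s
  root : ∃! s, s ∈ τ ∧ Subsplit.clade s = W
  children : ∀ s ∈ τ, ∀ C ∈ s, 2 ≤ C.card → ∃! s', s' ∈ τ ∧ Subsplit.clade s' = C
  parentEx : ∀ s ∈ τ, Subsplit.clade s = W ∨ ∃ t ∈ τ, Subsplit.clade s ∈ t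

/-- Restriction of a topology (set of subsplits) to taxon subset `B`:
restrict every subsplit and keep the nontrivial results. -/
noncomputable def restrictT (τ : Finset (Subsplit α)) (B : Finset α) : Finset (Subsplit α) :=
  (τ.image (fun s => Subsplit.restrict s B)).filter (fun s => Subsplit.Nontriv s)

/-- A subsplit support on taxon set `X'`: a set of valid nontrivial subsplits on `X'`. -/
def IsSupport (X' : Finset α) (S : Set (Subsplit α)) : Prop :=
  ∀ s ∈ S, Subsplit.Valid s ∧ Subsplit.Nontriv s ∧ Subsplit.clade s ⊆ X'

/-- `S(W)`: members of `S` dividing the clade `W`, together with the trivial subsplit `{W, ∅}`. -/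
def supportAt (S : Set (Subsplit α)) (W : Finset α) : Set (Subsplit α) :=
  {s | s ∈ S ∧ Subsplit.clade s = W} ∪ {Sym2.mk W (∅ : Finset α)}

/-- The set `s₁ ⊠ s₂` of the two candidate combinations of two subsplits. -/
def boxTimes (s₁ s₂ : Subsplit α) : Set (Subsplit α) :=
  {s | ∃ Y₁ Z₁ Y₂ Z₂ : Finset α, s₁ = Sym2.mk Y₁ Z₁ ∧ s₂ = Sym2.mk Y₂ Z₂ ∧
    (s = Sym2.mk (Y₁ ∪ Y₂) (Z₁ ∪ Z₂) ∨ s = Sym2.mk (Y₁ ∪ Z₂) (Z₁ ∪ Y₂))}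

/-- Reachable clades in the mutual subsplit support construction. -/
inductive ReachClade (S₁ S₂ : Set (Subsplit α)) (X₁ X₂ : Finset α) : Finset α → Prop
  | root : ReachClade S₁ S₂ X₁ X₂ (X₁ ∪ X₂)
  | step {W : Finset α} {s₁ s₂ s : Subsplit α} {C : Finset α} :
      ReachClade S₁ S₂ X₁ X₂ W →
      s₁ ∈ supportAt S₁ (W ∩ X₁) → s₂ ∈ supportAt S₂ (W ∩ X₂) →
      s ∈ boxTimes s₁ s₂ → Subsplit.Valid s → Subsplit.Nontriv s →
      C ∈ s → 2 ≤ C.card → ReachClade S₁ S₂ X₁ X₂ C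

/-- The mutual subsplit support `M(S₁, S₂)`. -/
def mutualSupport (S₁ S₂ : Set (Subsplit α)) (X₁ X₂ : Finset α) : Set (Subsplit α) :=
  {s | ∃ W s₁ s₂, ReachClade S₁ S₂ X₁ X₂ W ∧
    s₁ ∈ supportAt S₁ (W ∩ X₁) ∧ s₂ ∈ supportAt S₂ (W ∩ X₂) ∧
    s ∈ boxTimes s₁ s₂ ∧ Subsplit.Valid s ∧ Subsplit.Nontriv s}

/-- `(t, s)` is a PCSP on taxon set `X`: `s` is a valid nontrivial subsplit, and `t` is a
subsplit (or the root placeholder `⟨X, ∅⟩`) on `X` having `U(s)` as a child clade. -/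
def IsPCSPOn (X : Finset α) (p : PCSPair α) : Prop :=
  Subsplit.Valid p.2 ∧ Subsplit.Nontriv p.2 ∧ Subsplit.Valid p.1 ∧
    Subsplit.clade p.2 ∈ p.1 ∧ Subsplit.clade p.1 ⊆ X ∧
    (Subsplit.Nontriv p.1 ∨ p.1 = Sym2.mk X (∅ : Finset α))

/-- A PCSP support on taxon set `X'`. -/
def IsPCSPSupport (X' : Finset α) (P : Set (PCSPair α)) : Prop :=
  ∀ p ∈ P, IsPCSPOn X' p

/-- The subsplits of a PCSP support: subsplits occurring in some pair of `P`,
together with the root placeholder `⟨X', ∅⟩`. -/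
def subsplitsOfP (X' : Finset α) (P : Set (PCSPair α)) : Set (Subsplit α) :=
  {u | (∃ s, (u, s) ∈ P) ∨ (∃ t, (t, u) ∈ P)} ∪ {Sym2.mk X' (∅ : Finset α)}

/-- `P(t/W)`: the subsplits `s` with `U(s) = W` and `(t → s) ∈ P`,
together with the trivial subsplit `{W, ∅}`. -/
def pcspSupportAt (P : Set (PCSPair α)) (t : Subsplit α) (W : Finset α) : Set (Subsplit α) :=
  {s | Subsplit.clade s = W ∧ (t, s) ∈ P} ∪ {Sym2.mk W (∅ : Finset α)}

/-- Reachable states `(t/W, t₁/W₁, t₂/W₂)` in the mutual PCSP support construction. -/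
inductive ReachState (P₁ P₂ : Set (PCSPair α)) (X₁ X₂ : Finset α) :
    Subsplit α → Finset α → Subsplit α → Finset α → Subsplit α → Finset α → Prop
  | root : ReachState P₁ P₂ X₁ X₂ (Sym2.mk (X₁ ∪ X₂) (∅ : Finset α)) (X₁ ∪ X₂)
      (Sym2.mk X₁ (∅ : Finset α)) X₁ (Sym2.mk X₂ (∅ : Finset α)) X₂
  | step {t : Subsplit α} {W : Finset α} {t₁ : Subsplit α} {W₁ : Finset α}
      {t₂ : Subsplit α} {W₂ : Finset α} {s₁ s₂ s u₁ u₂ : Subsplit α} {C : Finset α} :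
      ReachState P₁ P₂ X₁ X₂ t W t₁ W₁ t₂ W₂ →
      s₁ ∈ pcspSupportAt P₁ t₁ W₁ → s₂ ∈ pcspSupportAt P₂ t₂ W₂ →
      s ∈ boxTimes s₁ s₂ → Subsplit.Valid s → Subsplit.Nontriv s →
      ((Subsplit.Nontriv s₁ ∧ u₁ = s₁) ∨ (¬ Subsplit.Nontriv s₁ ∧ u₁ = t₁)) →
      ((Subsplit.Nontriv s₂ ∧ u₂ = s₂) ∨ (¬ Subsplit.Nontriv s₂ ∧ u₂ = t₂)) →
      C ∈ s → 2 ≤ C.card →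
      ReachState P₁ P₂ X₁ X₂ s C u₁ (C ∩ X₁) u₂ (C ∩ X₂)

/-- The mutual PCSP support `M(P₁, P₂)`. -/
def mutualPCSP (P₁ P₂ : Set (PCSPair α)) (X₁ X₂ : Finset α) : Set (PCSPair α) :=
  {p | ∃ W t₁ W₁ t₂ W₂ s₁ s₂, ReachState P₁ P₂ X₁ X₂ p.1 W t₁ W₁ t₂ W₂ ∧
    s₁ ∈ pcspSupportAt P₁ t₁ W₁ ∧ s₂ ∈ pcspSupportAt P₂ t₂ W₂ ∧
    p.2 ∈ boxTimes s₁ s₂ ∧ Subsplit.Valid p.2 ∧ Subsplit.Nontriv p.2}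

/-- `PathTo M a c`: there is a chain of parent-child pairs of `M` from `a` down to `c`
(possibly empty, when `a = c`). -/
inductive PathTo (M : Set (PCSPair α)) : Subsplit α → Subsplit α → Prop
  | refl (a : Subsplit α) : PathTo M a a
  | cons {a b c : Subsplit α} : (a, b) ∈ M → PathTo M b c → PathTo M a c

/-- `(t, s)` is a PCSP of the topology `τ` on `X`: `s ∈ τ` and `t` is a member of `τ`
having `U(s)` as a child clade, or the root placeholder `⟨X, ∅⟩` when `U(s) = X`. -/
def IsPCSPOf (X : Finset α) (τ : Finset (Subsplit α)) (t s : Subsplit α) : Prop :=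
  s ∈ τ ∧ ((t ∈ τ ∧ Subsplit.clade s ∈ t) ∨
    (Subsplit.clade s = X ∧ t = Sym2.mk X (∅ : Finset α)))

/-- The set of PCSPs of a topology `τ` on `X`. -/
def pcspSet (X : Finset α) (τ : Finset (Subsplit α)) : Set (PCSPair α) :=
  {p | IsPCSPOf X τ p.1 p.2}

/-- `a` is an ancestor of `s` in `τ`: `a ∈ τ` (or the root placeholder) and `U(s)` is
contained in a child clade of `a`. -/
def IsAncestor (X : Finset α) (τ : Finset (Subsplit α)) (a s : Subsplit α) : Prop :=
  (a ∈ τ ∨ a = Sym2.mk X (∅ : Finset α)) ∧ ∃ C ∈ a, Subsplit.clade s ⊆ C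

/-- `d` is a strict descendant of `a`: `U(d)` is contained in a child clade of `a`. -/
def StrictDesc (a d : Subsplit α) : Prop := ∃ C ∈ a, Subsplit.clade d ⊆ C

/-- `d` is a (valid) descendant of `a`: `d = a`, or `U(d)` is contained in a child clade
of `a`. -/
def Descend (a d : Subsplit α) : Prop := d = a ∨ ∃ C ∈ a, Subsplit.clade d ⊆ C

/-- The parent subsplit of `s` in `τ` (on taxon set `X`): the member of `τ` having `U(s)`
as a child clade if one exists, otherwise the root placeholder `⟨X, ∅⟩`. -/
noncomputable def parentIn (X : Finset α) (τ : Finset (Subsplit α)) (s : Subsplit α) :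
    Subsplit α :=
  if h : ∃ t ∈ τ, Subsplit.clade s ∈ t then h.choose else Sym2.mk X (∅ : Finset α)

/-- The finite set of PCSPs of a topology `τ` on `X`. -/
noncomputable def pcspFinset (X : Finset α) (τ : Finset (Subsplit α)) : Finset (PCSPair α) :=
  τ.image (fun s => (parentIn X τ s, s))

/-- All (valid) subsplits on the taxon set `X`. -/
noncomputable def allSubsplits (X : Finset α) : Finset (Subsplit α) :=
  ((X.powerset ×ˢ X.powerset).image (fun p => Sym2.mk p.1 p.2)).filter (fun s => Subsplit.Valid s)

/-- All nontrivial (valid) subsplits dividing the clade `W`. -/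
noncomputable def subsplitsOn (W : Finset α) : Finset (Subsplit α) :=
  (W.powerset.image (fun Y => Sym2.mk Y (W \ Y))).filter (fun s => Subsplit.Nontriv s)

/-- All nontrivial subsplits whose parent clade is a child clade of `a`. -/
noncomputable def childSubsplits (a : Subsplit α) : Finset (Subsplit α) :=
  Sym2.lift ⟨fun Y Z => subsplitsOn Y ∪ subsplitsOn Z, fun _ _ => Finset.union_comm _ _⟩ a

end Defs

section CCD

variable {α : Type*} [DecidableEq α]

/-- CCD softmax conditional probability `q(s | U(s))`. -/
noncomputable def ccdCond (v : Subsplit α → ℝ) (s : Subsplit α) : ℝ :=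
  Real.exp (v s) / ∑ s' ∈ subsplitsOn (Subsplit.clade s), Real.exp (v s')

/-- CCD probability of a topology: `q(τ) = ∏_{s ∈ τ} q(s | U(s))`. -/
noncomputable def ccdTopProb (v : Subsplit α → ℝ) (τ : Finset (Subsplit α)) : ℝ :=
  ∏ s ∈ τ, ccdCond v s

/-- Unconditional subsplit probability `q(s)`: sum of `q(τ)` over topologies `τ ∈ T`
containing `s`. -/
noncomputable def ccdSubProb (T : Finset (Finset (Subsplit α))) (v : Subsplit α → ℝ)
    (s : Subsplit α) : ℝ :=
  ∑ τ ∈ T.filter (fun τ => s ∈ τ), ccdTopProb v τ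

/-- Unconditional clade probability `q(W)`: sum of `q(τ)` over topologies `τ ∈ T` in which
the clade `W` appears (i.e. `W = X` or `W` is a child clade of some subsplit of `τ`). -/
noncomputable def ccdCladeProb (X : Finset α) (T : Finset (Finset (Subsplit α)))
    (v : Subsplit α → ℝ) (W : Finset α) : ℝ :=
  ∑ τ ∈ T.filter (fun τ => W = X ∨ ∃ s ∈ τ, W ∈ s), ccdTopProb v τ

/-- Fuel-based recursion computing the CCD conditional path probability. -/
noncomputable def ccdPathAux (v : Subsplit α → ℝ) : ℕ → Subsplit α → Subsplit α → ℝ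
  | 0, a, d => if d = a then 1 else 0
  | n + 1, a, d => if d = a then 1 else
      ∑ s'' ∈ childSubsplits a, ccdCond v s'' * ccdPathAux v n s'' d

/-- CCD conditional path probability `q(a →* d | a)`: the sum over all descending chains of
subsplits from `a` to `d` of the product of the conditional probabilities along the chain. -/
noncomputable def ccdPath (v : Subsplit α → ℝ) (a d : Subsplit α) : ℝ :=
  ccdPathAux v ((Subsplit.clade a).card + 1) a d

/-- CCD conditional path probability starting from a clade:
`q(W →* d | W) = Σ_{s'' : U(s'') = W} q(s'' | U(s'')) q(s'' →* d | s'')`. -/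
noncomputable def ccdPathFromClade (v : Subsplit α → ℝ) (W : Finset α) (d : Subsplit α) : ℝ :=
  ∑ s'' ∈ subsplitsOn W, ccdCond v s'' * ccdPath v s'' d

end CCD

section SCD

variable {α : Type*} [DecidableEq α]

/-- SCD softmax conditional probability `q(s | t)`. -/
noncomputable def scdCond (v : PCSPair α → ℝ) (t s : Subsplit α) : ℝ :=
  Real.exp (v (t, s)) / ∑ s'' ∈ subsplitsOn (Subsplit.clade s), Real.exp (v (t, s''))

/-- SCD probability of a topology `τ` on `X`: the product over PCSPs `(t → s)` of `τ` of
`q(s | t)`. -/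
noncomputable def scdTopProb (v : PCSPair α → ℝ) (X : Finset α) (τ : Finset (Subsplit α)) : ℝ :=
  ∏ s ∈ τ, scdCond v (parentIn X τ s) s

/-- Unconditional subsplit probability `q(a)` for SCD-parameterized SBNs. -/
noncomputable def scdSubProb (T : Finset (Finset (Subsplit α))) (v : PCSPair α → ℝ)
    (X : Finset α) (a : Subsplit α) : ℝ :=
  ∑ τ ∈ T.filter (fun τ => a ∈ τ), scdTopProb v X τ

/-- Fuel-based recursion computing the SCD conditional path probability. -/
noncomputable def scdPathAux (v : PCSPair α → ℝ) : ℕ → Subsplit α → Subsplit α → ℝ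
  | 0, a, d => if d = a then 1 else 0
  | n + 1, a, d => if d = a then 1 else
      ∑ s'' ∈ childSubsplits a, scdCond v a s'' * scdPathAux v n s'' d

/-- SCD conditional path probability `q(a →* d | a)`. -/
noncomputable def scdPath (v : PCSPair α → ℝ) (a d : Subsplit α) : ℝ :=
  scdPathAux v ((Subsplit.clade a).card + 1) a d

/-- SCD conditional path probability from a subsplit `t` with designated child clade `W`:
`q(t/W →* d | t/W) = Σ_{s'' : U(s'') = W} q(s'' | t) q(s'' →* d | s'')`. -/
noncomputable def scdPathFrom (v : PCSPair α → ℝ) (t : Subsplit α) (W : Finset α)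
    (d : Subsplit α) : ℝ :=
  ∑ s'' ∈ subsplitsOn W, scdCond v t s'' * scdPath v s'' d

/-- Unconditional ancestor-descendant probability `q(a →* d)`: sum of `q(τ)` over topologies
`τ ∈ T` containing both `a` and `d` with `d` a descendant of `a`. -/
noncomputable def scdPairProb (T : Finset (Finset (Subsplit α))) (v : PCSPair α → ℝ)
    (X : Finset α) (a d : Subsplit α) : ℝ :=
  ∑ τ ∈ T.filter (fun τ => a ∈ τ ∧ d ∈ τ ∧ Descend a d), scdTopProb v X τ

end SCD

section Statements

variable {α : Type*} [DecidableEq α]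

/-! The clades of a tree are laminar: two subsplits of `τ` whose clades meet are equal or one
lies below a child clade of the other. Consequently restriction to `Xb` is injective on the
subsplits of `τ` with nontrivial restriction, and it carries `τ` onto the tree `τ|Xb`.
So `(tb → sb)` is a PCSP of `τ|Xb` exactly when `τ` contains some `a` and `d` restricting to
`tb` and `sb`; these are then unique, and `d` descends from `a` because a subsplit strictly
below another one cannot have the larger restricted clade. Both sides of the identity are
therefore the total weight of these trees `τ`. -/

namespace Subsplit

lemma clade_mk (Y Z : Finset α) : clade s(Y, Z) = Y ∪ Z := rfl

omit [DecidableEq α] in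
lemma valid_mk (Y Z : Finset α) : Valid s(Y, Z) ↔ Disjoint Y Z := Iff.rfl

omit [DecidableEq α] in
lemma nontriv_mk (Y Z : Finset α) : Nontriv s(Y, Z) ↔ Y.Nonempty ∧ Z.Nonempty := Iff.rfl

lemma restrict_mk (Y Z B : Finset α) : restrict s(Y, Z) B = s(Y ∩ B, Z ∩ B) := rfl

lemma clade_restrict (s : Subsplit α) (B : Finset α) :
    (s.restrict B).clade = s.clade ∩ B := by
  induction s using Sym2.ind with
  | _ Y Z => rw [restrict_mk, clade_mk, clade_mk, union_inter_distrib_right]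

lemma Valid.restrict {s : Subsplit α} (h : s.Valid) (B : Finset α) : (s.restrict B).Valid := by
  induction s using Sym2.ind with
  | _ Y Z => exact ((valid_mk Y Z).1 h).mono inter_subset_left inter_subset_left

lemma Nontriv.clade_nonempty {s : Subsplit α} (h : s.Nontriv) : s.clade.Nonempty := by
  induction s using Sym2.ind with
  | _ Y Z => exact h.1.mono subset_union_left

lemma two_le_card_clade {s : Subsplit α} (hv : s.Valid) (hn : s.Nontriv) :
    2 ≤ s.clade.card := by
  induction s using Sym2.ind with
  | _ Y Z =>
    rw [clade_mk, card_union_of_disjoint hv]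
    have := hn.1.card_pos
    have := hn.2.card_pos
    omega

lemma subset_clade_of_mem {s : Subsplit α} {C : Finset α} (h : C ∈ s) : C ⊆ s.clade := by
  obtain ⟨C', rfl⟩ := Sym2.mem_iff_exists.1 h
  exact subset_union_left

lemma ssubset_clade_of_mem {s : Subsplit α} (hv : s.Valid) (hn : s.Nontriv) {C : Finset α}
    (h : C ∈ s) : C ⊂ s.clade := by
  obtain ⟨C', rfl⟩ := Sym2.mem_iff_exists.1 h
  obtain ⟨z, hz⟩ := hn.2
  exact (ssubset_iff_of_subset subset_union_left).2
    ⟨z, mem_union_right _ hz, fun hzC => disjoint_left.1 hv hzC hz⟩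

omit [DecidableEq α] in
lemma Valid.eq_of_not_disjoint {s : Subsplit α} (hv : s.Valid) {C D : Finset α} (hC : C ∈ s)
    (hD : D ∈ s) (h : ¬ Disjoint C D) : C = D := by
  induction s using Sym2.ind with
  | _ Y Z =>
    rcases Sym2.mem_iff.1 hC with rfl | rfl <;> rcases Sym2.mem_iff.1 hD with rfl | rfl
    exacts [rfl, (h hv).elim, (h hv.symm).elim, rfl]

lemma not_clade_inter_subset_of_strictDesc {s s' : Subsplit α} {B : Finset α} (hv : s.Valid)
    (hn : (s.restrict B).Nontriv) (h : StrictDesc s s') : ¬ s.clade ∩ B ⊆ s'.clade ∩ B := by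
  obtain ⟨C, hC, hs'C⟩ := h
  obtain ⟨C', rfl⟩ := Sym2.mem_iff_exists.1 hC
  rw [restrict_mk, nontriv_mk] at hn
  obtain ⟨y, hy⟩ := hn.2
  rw [mem_inter] at hy
  intro hsub
  have hyC : y ∈ C := hs'C (mem_inter.1 (hsub (mem_inter.2 ⟨mem_union_right _ hy.1, hy.2⟩))).1
  exact disjoint_left.1 hv hyC hy.1

lemma exists_mem_inter_eq_of_not_nontriv {s : Subsplit α} {B : Finset α}
    (h : ¬ (s.restrict B).Nontriv) : ∃ D ∈ s, D ∩ B = s.clade ∩ B := by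
  induction s using Sym2.ind with
  | _ Y Z =>
    rw [restrict_mk, nontriv_mk, not_and_or, not_nonempty_iff_eq_empty,
      not_nonempty_iff_eq_empty] at h
    rw [clade_mk, union_inter_distrib_right]
    rcases h with h | h
    · exact ⟨Z, Sym2.mem_mk_right _ _, by rw [h, empty_union]⟩
    · exact ⟨Y, Sym2.mem_mk_left _ _, by rw [h, union_empty]⟩

end Subsplit

open Subsplit

lemma mem_restrictT {τ : Finset (Subsplit α)} {B : Finset α} {s : Subsplit α} :
    s ∈ restrictT τ B ↔ (∃ u ∈ τ, u.restrict B = s) ∧ s.Nontriv := by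
  simp [restrictT]

lemma mem_allSubsplits {X : Finset α} {a : Subsplit α} :
    a ∈ allSubsplits X ↔ a.Valid ∧ a.clade ⊆ X := by
  induction a using Sym2.ind with
  | _ Y Z =>
    simp only [allSubsplits, mem_filter, mem_image, mem_product, mem_powerset, Prod.exists]
    constructor
    · rintro ⟨⟨Y', Z', ⟨hY', hZ'⟩, heq⟩, hv⟩
      exact ⟨hv, heq ▸ union_subset hY' hZ'⟩
    · rintro ⟨hv, hYZ⟩
      exact ⟨⟨Y, Z, ⟨subset_union_left.trans hYZ, subset_union_right.trans hYZ⟩, rfl⟩, hv⟩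

lemma isPCSPOf_iff {X : Finset α} {τ : Finset (Subsplit α)} {t s : Subsplit α}
    (ht : t.Nontriv) (hst : s.clade ∈ t) : IsPCSPOf X τ t s ↔ t ∈ τ ∧ s ∈ τ := by
  constructor
  · rintro ⟨hs, ⟨htτ, -⟩ | ⟨-, rfl⟩⟩
    · exact ⟨htτ, hs⟩
    · exact (not_nonempty_empty ht.2).elim
  · rintro ⟨htτ, hs⟩
    exact ⟨hs, Or.inl ⟨htτ, hst⟩⟩

namespace IsTopology

variable {W B : Finset α} {τ : Finset (Subsplit α)}

lemma card_clade_lt_of_mem (hτ : IsTopology W τ) {p s : Subsplit α} (hp : p ∈ τ)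
    (hsp : s.clade ∈ p) : s.clade.card < p.clade.card :=
  card_lt_card (ssubset_clade_of_mem (hτ.valid p hp) (hτ.nontriv p hp) hsp)

@[elab_as_elim]
lemma induction_on_parent (hτ : IsTopology W τ) {P : Subsplit α → Prop}
    (root : ∀ s ∈ τ, s.clade = W → P s)
    (parent : ∀ s ∈ τ, ∀ p ∈ τ, s.clade ∈ p → P p → P s) {s : Subsplit α} (hs : s ∈ τ) :
    P s := by
  set M := τ.sup fun u => u.clade.card
  suffices ∀ n, ∀ s ∈ τ, M - s.clade.card < n → P s from this _ s hs (lt_add_one _)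
  intro n
  induction n with
  | zero => exact fun _ _ h => absurd h (Nat.not_lt_zero _)
  | succ n ih =>
    intro s hs hn
    rcases hτ.parentEx s hs with hW | ⟨p, hp, hsp⟩
    · exact root s hs hW
    · have hlt := hτ.card_clade_lt_of_mem hp hsp
      have hle : p.clade.card ≤ M := le_sup (f := fun u => u.clade.card) hp
      exact parent s hs p hp hsp (ih p hp (by omega))

lemma clade_subset (hτ : IsTopology W τ) {s : Subsplit α} (hs : s ∈ τ) : s.clade ⊆ W :=
  hτ.induction_on_parent (fun _ _ h => h.subset)
    (fun _ _ _ _ hsp hp => (subset_clade_of_mem hsp).trans hp) hs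

lemma eq_of_clade_eq (hτ : IsTopology W τ) {s s' : Subsplit α} (hs : s ∈ τ) (hs' : s' ∈ τ)
    (h : s.clade = s'.clade) : s = s' := by
  rcases hτ.parentEx s hs with hW | ⟨t, ht, hst⟩
  · exact hτ.root.unique ⟨hs, hW⟩ ⟨hs', h ▸ hW⟩
  · exact (hτ.children t ht _ hst (two_le_card_clade (hτ.valid s hs) (hτ.nontriv s hs))).unique
      ⟨hs, rfl⟩ ⟨hs', h.symm⟩

/-- The proof climbs from the smaller of the two subsplits to its parent, which decreases
`2 |W| - |U(s)| - |U(s')|`. -/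
lemma eq_or_strictDesc_or_strictDesc (hτ : IsTopology W τ) {s s' : Subsplit α} (hs : s ∈ τ)
    (hs' : s' ∈ τ) (hmeet : ¬ Disjoint s.clade s'.clade) :
    s = s' ∨ StrictDesc s s' ∨ StrictDesc s' s := by
  suffices ∀ n, ∀ s ∈ τ, ∀ s' ∈ τ, W.card - s.clade.card + (W.card - s'.clade.card) < n →
      ¬ Disjoint s.clade s'.clade → s = s' ∨ StrictDesc s s' ∨ StrictDesc s' s from
    this _ s hs s' hs' (lt_add_one _) hmeet
  intro n
  induction n with
  | zero => exact fun _ _ _ _ h => absurd h (Nat.not_lt_zero _)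
  | succ n ih =>
    intro s hs s' hs' hn hmeet
    wlog hle : s.clade.card ≤ s'.clade.card generalizing s s'
    · rcases this s' hs' s hs (by omega) (fun h => hmeet h.symm) (by omega) with h | h | h
      exacts [Or.inl h.symm, Or.inr (Or.inr h), Or.inr (Or.inl h)]
    have hsW := card_le_card (hτ.clade_subset hs)
    have hs'W := hτ.clade_subset hs'
    rcases hτ.parentEx s hs with hW | ⟨p, hp, hsp⟩
    · have hs'W' : s'.clade = W := eq_of_subset_of_card_le hs'W (hW ▸ hle)
      exact Or.inl (hτ.eq_of_clade_eq hs hs' (hW.trans hs'W'.symm))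
    have hlt := hτ.card_clade_lt_of_mem hp hsp
    have hpW := card_le_card (hτ.clade_subset hp)
    have hpmeet : ¬ Disjoint p.clade s'.clade :=
      fun h => hmeet (h.mono_left (subset_clade_of_mem hsp))
    rcases ih p hp s' hs' (by omega) hpmeet with rfl | ⟨C, hC, hs'C⟩ | ⟨C, hC, hpC⟩
    · exact Or.inr (Or.inr ⟨s.clade, hsp, subset_rfl⟩)
    · have hCs : C = s.clade := (hτ.valid p hp).eq_of_not_disjoint hC hsp
        fun h => hmeet (h.symm.mono_right hs'C)
      have hclade : s'.clade = s.clade := eq_of_subset_of_card_le (hCs ▸ hs'C) hle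
      exact Or.inl (hτ.eq_of_clade_eq hs hs' hclade.symm)
    · exact Or.inr (Or.inr ⟨C, hC, (subset_clade_of_mem hsp).trans hpC⟩)

lemma eq_of_clade_inter_eq (hτ : IsTopology W τ) {u u' : Subsplit α} (hu : u ∈ τ)
    (hu' : u' ∈ τ) (hn : (u.restrict B).Nontriv) (hn' : (u'.restrict B).Nontriv)
    (h : u.clade ∩ B = u'.clade ∩ B) : u = u' := by
  have hmeet : ¬ Disjoint u.clade u'.clade := by
    obtain ⟨x, hx⟩ := hn.clade_nonempty
    rw [clade_restrict] at hx
    exact not_disjoint_iff.2 ⟨x, (mem_inter.1 hx).1, (mem_inter.1 (h ▸ hx)).1⟩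
  rcases hτ.eq_or_strictDesc_or_strictDesc hu hu' hmeet with rfl | h' | h'
  · rfl
  · exact (not_clade_inter_subset_of_strictDesc (hτ.valid u hu) hn h' h.subset).elim
  · exact (not_clade_inter_subset_of_strictDesc (hτ.valid u' hu') hn' h' h.symm.subset).elim

lemma eq_of_restrict_eq (hτ : IsTopology W τ) {u u' : Subsplit α} (hu : u ∈ τ) (hu' : u' ∈ τ)
    (hn : (u.restrict B).Nontriv) (h : u.restrict B = u'.restrict B) : u = u' :=
  hτ.eq_of_clade_inter_eq hu hu' hn (h ▸ hn) (by rw [← clade_restrict, h, clade_restrict])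

lemma descend_of_clade_inter_subset (hτ : IsTopology W τ) {a d : Subsplit α} (ha : a ∈ τ)
    (hd : d ∈ τ) (hn : (d.restrict B).Nontriv) (h : d.clade ∩ B ⊆ a.clade ∩ B) :
    Descend a d := by
  have hmeet : ¬ Disjoint a.clade d.clade := by
    obtain ⟨x, hx⟩ := hn.clade_nonempty
    rw [clade_restrict] at hx
    exact not_disjoint_iff.2 ⟨x, (mem_inter.1 (h hx)).1, (mem_inter.1 hx).1⟩
  rcases hτ.eq_or_strictDesc_or_strictDesc ha hd hmeet with had | had | hda
  · exact Or.inl had.symm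
  · exact Or.inr had
  · exact (not_clade_inter_subset_of_strictDesc (hτ.valid d hd) hn hda h).elim

lemma exists_restrict_nontriv_clade_inter_eq (hτ : IsTopology W τ) {t : Subsplit α} (ht : t ∈ τ)
    (h2 : 2 ≤ (t.clade ∩ B).card) :
    ∃ u ∈ τ, (u.restrict B).Nontriv ∧ u.clade ∩ B = t.clade ∩ B := by
  induction hc : t.clade.card using Nat.strong_induction_on generalizing t with
  | _ n ih =>
    by_cases hn : (t.restrict B).Nontriv
    · exact ⟨t, ht, hn, rfl⟩
    obtain ⟨D, hD, hDB⟩ := exists_mem_inter_eq_of_not_nontriv hn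
    have hD2 : 2 ≤ D.card := (hDB ▸ h2).trans (card_le_card inter_subset_left)
    obtain ⟨s, ⟨hs, rfl⟩, -⟩ := hτ.children t ht D hD hD2
    obtain ⟨u, hu, hnu, hus⟩ :=
      ih _ (hc ▸ hτ.card_clade_lt_of_mem ht hD) hs (hDB ▸ h2) rfl
    exact ⟨u, hu, hnu, hus.trans hDB⟩

lemma exists_restrict_nontriv_clade_inter_mem (hτ : IsTopology W τ) (hBW : B ⊆ W) {d : Subsplit α}
    (hd : d ∈ τ) (hne : (d.clade ∩ B).Nonempty) (hB : d.clade ∩ B ≠ B) :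
    ∃ t ∈ τ, (t.restrict B).Nontriv ∧ d.clade ∩ B ∈ t.restrict B := by
  revert hne hB
  refine hτ.induction_on_parent ?_ ?_ hd
  · intro d _ hW _ hB
    exact (hB (by rw [hW, inter_eq_right.2 hBW])).elim
  intro d _ p hp hdp ih hne hB
  obtain ⟨C', rfl⟩ := Sym2.mem_iff_exists.1 hdp
  by_cases hC' : (C' ∩ B).Nonempty
  · exact ⟨_, hp, ⟨hne, hC'⟩, Sym2.mem_mk_left _ _⟩
  · have hpB : clade s(d.clade, C') ∩ B = d.clade ∩ B := by
      rw [clade_mk, union_inter_distrib_right, not_nonempty_iff_eq_empty.1 hC', union_empty]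
    rw [← hpB]
    exact ih (hpB ▸ hne) (hpB ▸ hB)

lemma existsUnique_mem_restrictT_clade_eq (hτ : IsTopology W τ) {t : Subsplit α} (ht : t ∈ τ)
    (h2 : 2 ≤ (t.clade ∩ B).card) :
    ∃! s, s ∈ _root_.restrictT τ B ∧ s.clade = t.clade ∩ B := by
  obtain ⟨u, hu, hnu, hut⟩ := hτ.exists_restrict_nontriv_clade_inter_eq ht h2
  refine ⟨u.restrict B, ⟨mem_restrictT.2 ⟨⟨u, hu, rfl⟩, hnu⟩, by rw [clade_restrict, hut]⟩, ?_⟩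
  rintro _ ⟨hs, hsc⟩
  obtain ⟨⟨u', hu', rfl⟩, hnu'⟩ := mem_restrictT.1 hs
  rw [clade_restrict] at hsc
  rw [hτ.eq_of_clade_inter_eq hu' hu hnu' hnu (hsc.trans hut.symm)]

lemma restrictT (hτ : IsTopology W τ) (hBW : B ⊆ W) (hB : 2 ≤ B.card) :
    IsTopology B (_root_.restrictT τ B) where
  two_le := hB
  valid s hs := by
    obtain ⟨⟨u, hu, rfl⟩, -⟩ := mem_restrictT.1 hs
    exact (hτ.valid u hu).restrict B
  nontriv s hs := (mem_restrictT.1 hs).2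
  root := by
    obtain ⟨r, ⟨hr, hrW⟩, -⟩ := hτ.root
    have hrB : r.clade ∩ B = B := by rw [hrW, inter_eq_right.2 hBW]
    have h := hτ.existsUnique_mem_restrictT_clade_eq hr (hrB.symm ▸ hB)
    rwa [hrB] at h
  children s hs C hC hC2 := by
    obtain ⟨⟨w, hw, rfl⟩, -⟩ := mem_restrictT.1 hs
    obtain ⟨D, hD, rfl⟩ := Sym2.mem_map.1 hC
    obtain ⟨s', ⟨hs', rfl⟩, -⟩ :=
      hτ.children w hw _ hD (hC2.trans (card_le_card inter_subset_left))
    exact hτ.existsUnique_mem_restrictT_clade_eq hs' hC2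
  parentEx s hs := by
    obtain ⟨⟨d, hd, rfl⟩, hn⟩ := mem_restrictT.1 hs
    rw [clade_restrict]
    by_cases hdB : d.clade ∩ B = B
    · exact Or.inl hdB
    obtain ⟨t, ht, hnt, hdt⟩ := hτ.exists_restrict_nontriv_clade_inter_mem hBW hd
      (clade_restrict d B ▸ hn.clade_nonempty) hdB
    exact Or.inr ⟨_, mem_restrictT.2 ⟨⟨t, ht, rfl⟩, hnt⟩, hdt⟩

/-- A tree contains at most one pair `a, d` restricting to `tb, sb`, and then `d` descends
from `a`. -/
lemma sum_sum_ite_descend (hτ : IsTopology W τ) {tb sb : Subsplit α} (htb : tb.Nontriv)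
    (hsb : sb.Nontriv) (hmem : sb.clade ∈ tb) {M : Type*} [AddCommMonoid M] (c : M) :
    (∑ a ∈ (allSubsplits W).filter (fun a => a.restrict B = tb),
      ∑ d ∈ (allSubsplits W).filter (fun d => d.restrict B = sb),
        if a ∈ τ ∧ d ∈ τ ∧ Descend a d then c else 0) =
      if tb ∈ _root_.restrictT τ B ∧ sb ∈ _root_.restrictT τ B then c else 0 := by
  have hall : ∀ {u}, u ∈ τ → u ∈ allSubsplits W :=
    fun hu => mem_allSubsplits.2 ⟨hτ.valid _ hu, hτ.clade_subset hu⟩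
  split_ifs with h
  · obtain ⟨⟨⟨a, ha, hat⟩, -⟩, ⟨⟨d, hd, hds⟩, -⟩⟩ := And.imp mem_restrictT.1 mem_restrictT.1 h
    have had : Descend a d := hτ.descend_of_clade_inter_subset ha hd (hds ▸ hsb)
      (by rw [← clade_restrict, ← clade_restrict, hat, hds]; exact subset_clade_of_mem hmem)
    rw [sum_eq_single_of_mem a (mem_filter.2 ⟨hall ha, hat⟩), sum_eq_single_of_mem d
      (mem_filter.2 ⟨hall hd, hds⟩), if_pos ⟨ha, hd, had⟩]
    · exact fun d' hd' hne => if_neg fun h' => hne (hτ.eq_of_restrict_eq h'.2.1 hd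
        ((mem_filter.1 hd').2 ▸ hsb) ((mem_filter.1 hd').2.trans hds.symm))
    · exact fun a' ha' hne => sum_eq_zero fun _ _ => if_neg fun h' => hne (hτ.eq_of_restrict_eq
        h'.1 ha ((mem_filter.1 ha').2 ▸ htb) ((mem_filter.1 ha').2.trans hat.symm))
  · refine sum_eq_zero fun a ha => sum_eq_zero fun d hd => if_neg ?_
    rintro ⟨haτ, hdτ, -⟩
    exact h ⟨mem_restrictT.2 ⟨⟨a, haτ, (mem_filter.1 ha).2⟩, htb⟩,
      mem_restrictT.2 ⟨⟨d, hdτ, (mem_filter.1 hd).2⟩, hsb⟩⟩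

end IsTopology

theorem stmt14_general (X Xb : Finset α) (hsub : Xb ⊆ X) (hXb : 2 ≤ Xb.card)
    (T : Finset (Finset (Subsplit α))) (hT : ∀ τ, τ ∈ T ↔ IsTopology X τ)
    (Tb : Finset (Finset (Subsplit α))) (hTb : ∀ τb, τb ∈ Tb ↔ IsTopology Xb τb)
    (q : Finset (Subsplit α) → NNReal)
    (tb sb : Subsplit α)
    (htnt : Subsplit.Nontriv tb)
    (hsnt : Subsplit.Nontriv sb)
    (hmem : Subsplit.clade sb ∈ tb) :
    (∑ τb ∈ Tb.filter (fun τb => IsPCSPOf Xb τb tb sb),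
        ∑ τ ∈ T.filter (fun τ => restrictT τ Xb = τb), q τ) =
    ∑ a ∈ (allSubsplits X).filter (fun a => Subsplit.restrict a Xb = tb),
      ∑ d ∈ (allSubsplits X).filter (fun d => Subsplit.restrict d Xb = sb),
        ∑ τ ∈ T.filter (fun τ => a ∈ τ ∧ d ∈ τ ∧ Descend a d), q τ := by
  have hpcsp : ∀ τ ∈ T, restrictT τ Xb ∈ Tb.filter (fun τb => IsPCSPOf Xb τb tb sb) ↔
      tb ∈ restrictT τ Xb ∧ sb ∈ restrictT τ Xb := fun τ hτ => by
    rw [mem_filter, isPCSPOf_iff htnt hmem,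
      and_iff_right ((hTb _).2 (((hT τ).1 hτ).restrictT hsub hXb))]
  rw [sum_fiberwise_eq_sum_filter, sum_filter]
  simp only [sum_filter (s := T)]
  rw [sum_comm_cycle]
  refine sum_congr rfl fun τ hτ => ?_
  rw [((hT τ).1 hτ).sum_sum_ite_descend htnt hsnt hmem, if_congr (hpcsp τ hτ) rfl rfl]

theorem stmt14 (X Xb : Finset α) (hsub : Xb ⊆ X) (hXb : 2 ≤ Xb.card)
    (T : Finset (Finset (Subsplit α))) (hT : ∀ τ, τ ∈ T ↔ IsTopology X τ)
    (Tb : Finset (Finset (Subsplit α))) (hTb : ∀ τb, τb ∈ Tb ↔ IsTopology Xb τb)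
    (q : Finset (Subsplit α) → NNReal)
    (tb sb : Subsplit α)
    (htv : Subsplit.Valid tb) (htnt : Subsplit.Nontriv tb) (htcl : Subsplit.clade tb ⊆ Xb)
    (hsv : Subsplit.Valid sb) (hsnt : Subsplit.Nontriv sb)
    (hmem : Subsplit.clade sb ∈ tb) :
    (∑ τb ∈ Tb.filter (fun τb => IsPCSPOf Xb τb tb sb),
        ∑ τ ∈ T.filter (fun τ => restrictT τ Xb = τb), q τ) =
    ∑ a ∈ (allSubsplits X).filter (fun a => Subsplit.restrict a Xb = tb),
      ∑ d ∈ (allSubsplits X).filter (fun d => Subsplit.restrict d Xb = sb),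
        ∑ τ ∈ T.filter (fun τ => a ∈ τ ∧ d ∈ τ ∧ Descend a d), q τ :=
  stmt14_general X Xb hsub hXb T hT Tb hTb q tb sb htnt hsnt hmem

end Statements
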